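/- arXiv:1506.04969 — 2 statements merged into one kernel-verified Lean document; each statement's English description precedes it below -/
import Mathlib

section
/- Let φ₀(t) = log(1/t) for t ∈ (0,1). Then [e^{εφ₀}]_{A∞((0,1))} = e^{−ε}/(1−ε) for every 0 ≤ ε < 1, and [e^{−εφ₀}]_{A∞((0,1))} = e^{ε}/(1+ε) for every 0 ≤ ε < ∞. Consequently ε_{φ₀} = 1 and ε_{−φ₀} = ∞, where ε_φ = sup{ε > 0 : e^{εφ} ∈ A∞((0,1))}. -/
/-!
For the power weight `w(t) = t^α` with `α > -1` both averages over `J = (c,d)` are explicit: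
`w_J e^{-(log w)_J} = e^α/(α+1) · (d^{α+1} - c^{α+1})/(d - c) · e^{-α L}` with
`L = (d log d - c log c)/(d - c)`. The last two factors multiply to at most `1`: bound `c^α`
below by the tangent line of `exp` at `α log d`. Equality holds for `J = (0,1)`, so
`[t^α]_{A∞((0,1))} = e^α/(α+1)`. Since `e^{±εφ₀} = t^{∓ε}` and `t^α` is integrable near `0` only
for `α > -1`, the admissible `ε` are exactly `(0,1)` for `φ₀` and all `ε > 0` for `-φ₀`.
-/

open MeasureTheory Real Set Filter

/-- The average of `φ` over the interval `(c,d)`. -/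
noncomputable def intervalAvg (φ : ℝ → ℝ) (c d : ℝ) : ℝ :=
  (∫ t in c..d, φ t) / (d - c)

/-- The `p`-oscillation of `φ` over `(c,d)`. -/
noncomputable def oscP (p : ℝ) (φ : ℝ → ℝ) (c d : ℝ) : ℝ :=
  (intervalAvg (fun t => |φ t - intervalAvg φ c d| ^ p) c d) ^ (1 / p)

/-- The `BMO^p` norm of `φ` on the interval `(a,b)`. -/
noncomputable def bmoNorm (p a b : ℝ) (φ : ℝ → ℝ) : ℝ :=
  sSup {r : ℝ | ∃ c d : ℝ, a ≤ c ∧ c < d ∧ d ≤ b ∧ r = oscP p φ c d}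

/-- The `A∞` characteristic of the weight `w` on the interval `(a,b)`:
`sup_J (w_J)·e^{−(log w)_J}` over subintervals `J` of `(a,b)`. -/
noncomputable def aInftyChar (a b : ℝ) (w : ℝ → ℝ) : ℝ :=
  sSup {r : ℝ | ∃ c d : ℝ, a ≤ c ∧ c < d ∧ d ≤ b ∧
    r = intervalAvg w c d *
      Real.exp (-(intervalAvg (fun t => Real.log (w t)) c d))}

/-- `w ∈ A∞((a,b))`: `w` positive a.e., `w` and `log w` locally integrable, and
the `A∞` characteristic finite. -/
def MemAInfty (a b : ℝ) (w : ℝ → ℝ) : Prop :=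
  (∀ᵐ t ∂(volume.restrict (Set.Ioo a b)), 0 < w t) ∧
  (∀ c d : ℝ, a ≤ c → c < d → d ≤ b →
    IntervalIntegrable w volume c d ∧
    IntervalIntegrable (fun t => Real.log (w t)) volume c d) ∧
  BddAbove {r : ℝ | ∃ c d : ℝ, a ≤ c ∧ c < d ∧ d ≤ b ∧
    r = intervalAvg w c d *
      Real.exp (-(intervalAvg (fun t => Real.log (w t)) c d))}

open scoped ENNReal

/-- `ε_φ = sup{ε > 0 : e^{εφ} ∈ A∞((a,b))}`, as an extended real. -/
noncomputable def epsPhi (a b : ℝ) (φ : ℝ → ℝ) : ℝ≥0∞ :=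
  ⨆ (ε : ℝ) (_ : 0 < ε ∧ MemAInfty a b fun t => Real.exp (ε * φ t)),
    ENNReal.ofReal ε

open intervalIntegral

noncomputable def aInftyQuot (w : ℝ → ℝ) (c d : ℝ) : ℝ :=
  intervalAvg w c d * exp (-(intervalAvg (fun t => log (w t)) c d))

section AInfty

variable {a b : ℝ} {w : ℝ → ℝ}

lemma aInftyChar_eq_of_le_of_eq {M : ℝ} (hab : a < b)
    (hle : ∀ c d, a ≤ c → c < d → d ≤ b → aInftyQuot w c d ≤ M) (heq : aInftyQuot w a b = M) :
    aInftyChar a b w = M :=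
  IsGreatest.csSup_eq ⟨⟨a, b, le_rfl, hab, le_rfl, heq.symm⟩,
    by rintro _ ⟨c, d, hc, hcd, hd, rfl⟩; exact hle c d hc hcd hd⟩

lemma memAInfty_of_le {M : ℝ} (hpos : ∀ t, 0 < w t)
    (hint : ∀ c d, a ≤ c → c < d → d ≤ b →
      IntervalIntegrable w volume c d ∧ IntervalIntegrable (fun t => log (w t)) volume c d)
    (hle : ∀ c d, a ≤ c → c < d → d ≤ b → aInftyQuot w c d ≤ M) :
    MemAInfty a b w :=
  ⟨ae_of_all _ hpos, hint, ⟨M, by rintro _ ⟨c, d, hc, hcd, hd, rfl⟩; exact hle c d hc hcd hd⟩⟩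

end AInfty

section PowerWeight

variable {α c d : ℝ}

lemma exp_mul_log_of_pos {t : ℝ} (ht : 0 < t) : exp (α * log t) = t ^ α := by
  rw [rpow_def_of_pos ht, mul_comm]

lemma exp_mul_log_eqOn_Ioc (hc : 0 ≤ c) : EqOn (fun t => exp (α * log t)) (· ^ α) (Ioc c d) :=
  fun _ ht => exp_mul_log_of_pos (hc.trans_lt ht.1)

lemma intervalIntegrable_exp_mul_log (hα : -1 < α) (hc : 0 ≤ c) (hcd : c ≤ d) :
    IntervalIntegrable (fun t => exp (α * log t)) volume c d := by
  rw [intervalIntegrable_iff_integrableOn_Ioc_of_le hcd]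
  exact ((intervalIntegrable_iff_integrableOn_Ioc_of_le hcd).1
    (intervalIntegrable_rpow' hα)).congr_fun (exp_mul_log_eqOn_Ioc hc).symm measurableSet_Ioc

lemma integral_exp_mul_log (hα : -1 < α) (hc : 0 ≤ c) (hcd : c ≤ d) :
    ∫ t in c..d, exp (α * log t) = (d ^ (α + 1) - c ^ (α + 1)) / (α + 1) := by
  rw [integral_congr_ae (ae_of_all _ fun t ht =>
    exp_mul_log_eqOn_Ioc hc (by rwa [uIoc_of_le hcd] at ht)), integral_rpow (Or.inl hα)]

lemma intervalAvg_log_exp_mul_log (hcd : c < d) :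
    intervalAvg (fun t => log (exp (α * log t))) c d =
      α * ((d * log d - c * log c) / (d - c) - 1) := by
  have hdc : d - c ≠ 0 := sub_ne_zero.2 hcd.ne'
  simp only [intervalAvg, log_exp, intervalIntegral.integral_const_mul, integral_log]
  field_simp
  ring

lemma mul_rpow_mul_one_add_le_rpow_add_one (hc : 0 ≤ c) (hd : 0 < d) :
    c * d ^ α * (1 + α * (log c - log d)) ≤ c ^ (α + 1) := by
  rcases hc.eq_or_lt with rfl | hc
  · simpa using rpow_nonneg le_rfl (α + 1)
  have htangent : d ^ α * (1 + α * (log c - log d)) ≤ c ^ α := by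
    rw [rpow_def_of_pos hd, rpow_def_of_pos hc]
    calc exp (log d * α) * (1 + α * (log c - log d))
        ≤ exp (log d * α) * exp (α * (log c - log d)) := by
          gcongr; linarith [add_one_le_exp (α * (log c - log d))]
      _ = exp (log c * α) := by rw [← exp_add]; congr 1; ring
  rw [rpow_add_one hc.ne', mul_assoc, mul_comm]
  exact mul_le_mul_of_nonneg_right htangent hc.le

lemma rpow_add_one_sub_rpow_add_one_le (hc : 0 ≤ c) (hcd : c < d) :
    d ^ (α + 1) - c ^ (α + 1) ≤ (d - c) * exp (α * ((d * log d - c * log c) / (d - c))) := by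
  have hd : 0 < d := hc.trans_lt hcd
  have hdc : 0 < d - c := sub_pos.2 hcd
  set X := α * c * (log d - log c) / (d - c) with hX
  have hexp : α * ((d * log d - c * log c) / (d - c)) = log d * α + X := by
    rw [hX]; field_simp; ring
  calc d ^ (α + 1) - c ^ (α + 1)
      ≤ d ^ α * d - c * d ^ α * (1 + α * (log c - log d)) := by
        rw [rpow_add_one hd.ne']; linarith [mul_rpow_mul_one_add_le_rpow_add_one (α := α) hc hd]
    _ = (d - c) * d ^ α * (1 + X) := by rw [hX]; field_simp; ring
    _ ≤ (d - c) * d ^ α * exp X := by gcongr; linarith [add_one_le_exp X]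
    _ = (d - c) * exp (α * ((d * log d - c * log c) / (d - c))) := by
        rw [hexp, exp_add, rpow_def_of_pos hd]; ring

lemma aInftyQuot_exp_mul_log (hα : -1 < α) (hc : 0 ≤ c) (hcd : c < d) :
    aInftyQuot (fun t => exp (α * log t)) c d = exp α / (α + 1) * ((d ^ (α + 1) - c ^ (α + 1)) /
      (d - c) * exp (-(α * ((d * log d - c * log c) / (d - c))))) := by
  rw [aInftyQuot, intervalAvg_log_exp_mul_log hcd, intervalAvg,
    integral_exp_mul_log hα hc hcd.le, mul_sub, mul_one, neg_sub, sub_eq_add_neg α, exp_add]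
  ring

lemma aInftyQuot_exp_mul_log_le (hα : -1 < α) (hc : 0 ≤ c) (hcd : c < d) :
    aInftyQuot (fun t => exp (α * log t)) c d ≤ exp α / (α + 1) := by
  have hα' : 0 < α + 1 := by linarith
  rw [aInftyQuot_exp_mul_log hα hc hcd]
  refine mul_le_of_le_one_right (by positivity) ?_
  rw [div_mul_eq_mul_div, div_le_one (sub_pos.2 hcd), ← le_div_iff₀ (exp_pos _), div_eq_mul_inv,
    ← exp_neg, neg_neg]
  exact rpow_add_one_sub_rpow_add_one_le hc hcd

lemma aInftyQuot_exp_mul_log_zero_one (hα : -1 < α) :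
    aInftyQuot (fun t => exp (α * log t)) 0 1 = exp α / (α + 1) := by
  rw [aInftyQuot_exp_mul_log hα le_rfl one_pos, zero_rpow (by linarith)]
  simp

lemma memAInfty_exp_mul_log (hα : -1 < α) : MemAInfty 0 1 (fun t => exp (α * log t)) :=
  memAInfty_of_le (fun _ => exp_pos _)
    (fun _ _ hc hcd _ => ⟨intervalIntegrable_exp_mul_log hα hc hcd.le,
      by simpa only [log_exp] using intervalIntegrable_log'.const_mul α⟩)
    (fun _ _ hc hcd _ => aInftyQuot_exp_mul_log_le hα hc hcd)

lemma aInftyChar_exp_mul_log (hα : -1 < α) :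
    aInftyChar 0 1 (fun t => exp (α * log t)) = exp α / (α + 1) :=
  aInftyChar_eq_of_le_of_eq one_pos (fun _ _ hc hcd _ => aInftyQuot_exp_mul_log_le hα hc hcd)
    (aInftyQuot_exp_mul_log_zero_one hα)

lemma neg_one_lt_of_memAInfty_exp_mul_log (h : MemAInfty 0 1 (fun t => exp (α * log t))) :
    -1 < α := by
  have hint := (h.2.1 0 1 le_rfl one_pos le_rfl).1
  rw [intervalIntegrable_iff_integrableOn_Ioc_of_le zero_le_one] at hint
  rw [← integrableOn_Ioo_rpow_iff one_pos]
  exact (hint.mono_set Ioo_subset_Ioc_self).congr_fun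
    (fun t ht => exp_mul_log_of_pos ht.1) measurableSet_Ioo

lemma memAInfty_exp_mul_log_iff : MemAInfty 0 1 (fun t => exp (α * log t)) ↔ -1 < α :=
  ⟨neg_one_lt_of_memAInfty_exp_mul_log, memAInfty_exp_mul_log⟩

end PowerWeight

section EpsPhi

variable {a b : ℝ} {φ : ℝ → ℝ}

lemma ofReal_le_epsPhi {ε : ℝ} (hε : 0 < ε) (h : MemAInfty a b (fun t => exp (ε * φ t))) :
    ENNReal.ofReal ε ≤ epsPhi a b φ :=
  le_iSup₂ (f := fun ε (_ : 0 < ε ∧ MemAInfty a b fun t => exp (ε * φ t)) => ENNReal.ofReal ε)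
    ε ⟨hε, h⟩

lemma epsPhi_eq_ofReal {B : ℝ} (hB : 0 < B)
    (h : ∀ ε, 0 < ε → (MemAInfty a b (fun t => exp (ε * φ t)) ↔ ε < B)) :
    epsPhi a b φ = ENNReal.ofReal B := by
  refine le_antisymm (iSup₂_le fun ε hε => ENNReal.ofReal_le_ofReal ((h ε hε.1).1 hε.2).le) ?_
  refine le_of_forall_lt fun x hx => ?_
  obtain ⟨ε, -, hxε, hεB⟩ := ENNReal.lt_iff_exists_real_btwn.1 hx
  have hε : 0 < ε := ENNReal.ofReal_pos.1 (pos_of_gt hxε)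
  exact hxε.trans_le (ofReal_le_epsPhi hε ((h ε hε).2 ((ENNReal.ofReal_lt_ofReal_iff hB).1 hεB)))

lemma epsPhi_eq_top (h : ∀ ε, 0 < ε → MemAInfty a b (fun t => exp (ε * φ t))) :
    epsPhi a b φ = ⊤ := by
  refine ENNReal.eq_top_of_forall_nnreal_le fun r => ?_
  have hr : (0 : ℝ) < r + 1 := by positivity
  calc (r : ℝ≥0∞) = ENNReal.ofReal r := (ENNReal.ofReal_coe_nnreal).symm
    _ ≤ ENNReal.ofReal (r + 1) := ENNReal.ofReal_le_ofReal (by linarith)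
    _ ≤ epsPhi a b φ := ofReal_le_epsPhi hr (h _ hr)

end EpsPhi

/-- For `φ₀(t) = log(1/t)` on `(0,1)`:
`[e^{εφ₀}]_{A∞((0,1))} = e^{−ε}/(1−ε)` for `0 ≤ ε < 1`,
`[e^{−εφ₀}]_{A∞((0,1))} = e^{ε}/(1+ε)` for `0 ≤ ε < ∞`; consequently
`ε_{φ₀} = 1` and `ε_{−φ₀} = ∞`. -/
theorem aInftyChar_log_one_div :
    (∀ ε : ℝ, 0 ≤ ε → ε < 1 →
      MemAInfty 0 1 (fun t => Real.exp (ε * Real.log (1 / t))) ∧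
      aInftyChar 0 1 (fun t => Real.exp (ε * Real.log (1 / t))) =
        Real.exp (-ε) / (1 - ε)) ∧
    (∀ ε : ℝ, 0 ≤ ε →
      MemAInfty 0 1 (fun t => Real.exp (-(ε * Real.log (1 / t)))) ∧
      aInftyChar 0 1 (fun t => Real.exp (-(ε * Real.log (1 / t)))) =
        Real.exp ε / (1 + ε)) ∧
    epsPhi 0 1 (fun t => Real.log (1 / t)) = 1 ∧
    epsPhi 0 1 (fun t => -Real.log (1 / t)) = ⊤ := by
  have hφ₀ (ε : ℝ) : (fun t => exp (ε * log (1 / t))) = fun t => exp (-ε * log t) := by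
    simp only [one_div, log_inv, mul_neg, neg_mul]
  have hnegφ₀ (ε : ℝ) : (fun t => exp (-(ε * log (1 / t)))) = fun t => exp (ε * log t) := by
    simp only [one_div, log_inv, mul_neg, neg_neg]
  have hnegφ₀' (ε : ℝ) : (fun t => exp (ε * -log (1 / t))) = fun t => exp (ε * log t) := by
    simp only [one_div, log_inv, neg_neg]
  refine ⟨fun ε _ hε => ?_, fun ε hε => ?_, ?_, ?_⟩
  · rw [hφ₀, aInftyChar_exp_mul_log (by linarith), neg_add_eq_sub]
    exact ⟨memAInfty_exp_mul_log (by linarith), rfl⟩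
  · rw [hnegφ₀, aInftyChar_exp_mul_log (by linarith), add_comm]
    exact ⟨memAInfty_exp_mul_log (by linarith), rfl⟩
  · rw [epsPhi_eq_ofReal one_pos fun ε _ => by rw [hφ₀, memAInfty_exp_mul_log_iff, neg_lt_neg_iff],
      ENNReal.ofReal_one]
  · exact epsPhi_eq_top fun ε hε => by rw [hnegφ₀']; exact memAInfty_exp_mul_log (by linarith)
end

section
/- Let φ be such that e^φ ∈ A∞ (on ℝⁿ or on a cube), and for real numbers c < d define the truncation φ_{c,d} = c on {φ ≤ c}, φ_{c,d} = φ on {c < φ < d}, and φ_{c,d} = d on {φ ≥ d}. Then for every cube J, (1/|J|)∫_J e^{φ_{c,d} − (φ_{c,d})_J} ≤ (1/|J|)∫_J e^{φ − φ_J}, and consequently [e^{φ_{c,d}}]_{A∞} ≤ [e^{φ}]_{A∞}. -/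
open MeasureTheory Real Set Filter

/-- The average of `φ` over the axis-parallel cube with corner `c` and side `h`
in `ℝⁿ` (the cube has volume `hⁿ`). -/
noncomputable def cubeAvg (n : ℕ) (φ : (Fin n → ℝ) → ℝ) (c : Fin n → ℝ) (h : ℝ) : ℝ :=
  (∫ t in Set.Icc c (fun i => c i + h), φ t) / h ^ n

/-- The `A∞` characteristic of `w` over all cubes in `ℝⁿ`:
`sup_J (w_J)·e^{−(log w)_J}`. -/
noncomputable def aInftyCharRn (n : ℕ) (w : (Fin n → ℝ) → ℝ) : ℝ :=
  sSup {r : ℝ | ∃ (c : Fin n → ℝ) (h : ℝ), 0 < h ∧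
    r = cubeAvg n w c h *
      Real.exp (-(cubeAvg n (fun t => Real.log (w t)) c h))}

/-- `w ∈ A∞(ℝⁿ)`. -/
def MemAInftyRn (n : ℕ) (w : (Fin n → ℝ) → ℝ) : Prop :=
  (∀ᵐ t ∂(volume : Measure (Fin n → ℝ)), 0 < w t) ∧
  (∀ (c : Fin n → ℝ) (h : ℝ), 0 < h →
    IntegrableOn w (Set.Icc c fun i => c i + h) volume ∧
    IntegrableOn (fun t => Real.log (w t)) (Set.Icc c fun i => c i + h) volume) ∧
  BddAbove {r : ℝ | ∃ (c : Fin n → ℝ) (h : ℝ), 0 < h ∧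
    r = cubeAvg n w c h *
      Real.exp (-(cubeAvg n (fun t => Real.log (w t)) c h))}

/-!
Write `T t = max c (min t d)`. Both `T` and `t ↦ t - T t` are monotone, so for `v = T ∘ φ` the
functions `e^v` and `e^{φ - v}` are similarly ordered. On a cube normalized to a probability space,
Chebyshev's correlation inequality gives `(∫ e^v)(∫ e^{φ - v}) ≤ ∫ e^φ`, and Jensen's inequality
gives `e^{∫ φ - ∫ v} ≤ ∫ e^{φ - v}`; together `(∫ e^v) e^{-∫ v} ≤ (∫ e^φ) e^{-∫ φ}`.
-/

open ProbabilityTheory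

section ProbabilitySpace

variable {α : Type*} [MeasurableSpace α] {μ : Measure α} [IsProbabilityMeasure μ]

theorem Monovary.integral_mul_integral_le {f g : α → ℝ} (hfg : Monovary f g)
    (hf : Integrable f μ) (hg : Integrable g μ) (hfg_int : Integrable (fun x => f x * g x) μ) :
    (∫ x, f x ∂μ) * ∫ x, g x ∂μ ≤ ∫ x, f x * g x ∂μ := by
  have hdiag₁ : Integrable (fun p : α × α => f p.1 * g p.1) (μ.prod μ) := by
    simpa using hfg_int.mul_prod (integrable_const (1 : ℝ))
  have hdiag₂ : Integrable (fun p : α × α => f p.2 * g p.2) (μ.prod μ) := by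
    simpa using (integrable_const (1 : ℝ)).mul_prod hfg_int
  have hcross₁ : Integrable (fun p : α × α => f p.1 * g p.2) (μ.prod μ) := hf.mul_prod hg
  have hcross₂ : Integrable (fun p : α × α => g p.1 * f p.2) (μ.prod μ) := hg.mul_prod hf
  have hnonneg : 0 ≤ ∫ p : α × α, (f p.1 - f p.2) * (g p.1 - g p.2) ∂(μ.prod μ) :=
    integral_nonneg fun p => monovary_iff_forall_mul_nonneg.1 hfg p.2 p.1
  have hexpand : (fun p : α × α => (f p.1 - f p.2) * (g p.1 - g p.2)) = fun p =>
      (f p.1 * g p.1 + f p.2 * g p.2) - (f p.1 * g p.2 + g p.1 * f p.2) := by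
    funext p; ring
  have hdiag : Integrable (fun p : α × α => f p.1 * g p.1 + f p.2 * g p.2) (μ.prod μ) :=
    hdiag₁.add hdiag₂
  have hcross : Integrable (fun p : α × α => f p.1 * g p.2 + g p.1 * f p.2) (μ.prod μ) :=
    hcross₁.add hcross₂
  rw [hexpand, integral_sub hdiag hcross, integral_add hdiag₁ hdiag₂,
    integral_add hcross₁ hcross₂] at hnonneg
  have hdiag₁_eq : ∫ p : α × α, f p.1 * g p.1 ∂(μ.prod μ) = ∫ x, f x * g x ∂μ := by
    simpa using integral_prod_mul (μ := μ) (ν := μ) (fun x => f x * g x) (fun _ => (1 : ℝ))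
  have hdiag₂_eq : ∫ p : α × α, f p.2 * g p.2 ∂(μ.prod μ) = ∫ x, f x * g x ∂μ := by
    simpa using integral_prod_mul (μ := μ) (ν := μ) (fun _ => (1 : ℝ)) (fun x => f x * g x)
  rw [hdiag₁_eq, hdiag₂_eq, integral_prod_mul f g, integral_prod_mul g f] at hnonneg
  linarith

theorem exp_integral_le_integral_exp {f : α → ℝ} (hf : Integrable f μ)
    (hef : Integrable (fun x => exp (f x)) μ) : exp (∫ x, f x ∂μ) ≤ ∫ x, exp (f x) ∂μ :=
  convexOn_exp.map_integral_le continuous_exp.continuousOn isClosed_univ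
    (ae_of_all _ fun _ => mem_univ _) hf hef

end ProbabilitySpace

theorem integral_exp_mul_exp_neg_integral {α : Type*} [MeasurableSpace α] (μ : Measure α)
    (f : α → ℝ) :
    (∫ x, exp (f x) ∂μ) * exp (-∫ x, f x ∂μ) = ∫ x, exp (f x - ∫ y, f y ∂μ) ∂μ := by
  simp only [sub_eq_add_neg, exp_add, integral_mul_const]

section MonotoneContraction

variable {T : ℝ → ℝ} (hT : Monotone T) (hT' : Monotone fun t => t - T t)
include hT hT'

theorem abs_sub_apply_zero_le_of_monotone_sub (t : ℝ) : |T t - T 0| ≤ |t| := by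
  rcases le_total t 0 with ht | ht
  · rw [abs_of_nonpos ht, abs_le]; constructor <;> linarith [hT ht, hT' ht]
  · rw [abs_of_nonneg ht, abs_le]; constructor <;> linarith [hT ht, hT' ht]

theorem le_apply_zero_add_max_zero_of_monotone_sub (t : ℝ) : T t ≤ T 0 + max t 0 := by
  rcases le_total t 0 with ht | ht
  · linarith [hT ht, le_max_right t 0]
  · linarith [hT' ht, le_max_left t 0]

variable {α : Type*} [MeasurableSpace α] {μ : Measure α} [IsProbabilityMeasure μ] {u : α → ℝ}

theorem integrable_comp_of_monotone_sub (hu : Integrable u μ) :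
    Integrable (fun x => T (u x)) μ := by
  refine (hu.abs.add (integrable_const |T 0|)).mono'
    (hT.measurable.comp_aemeasurable hu.aemeasurable).aestronglyMeasurable (ae_of_all _ fun x => ?_)
  have := abs_sub_apply_zero_le_of_monotone_sub hT hT' (u x)
  show |T (u x)| ≤ |u x| + |T 0|
  linarith [abs_sub_abs_le_abs_sub (T (u x)) (T 0)]

theorem integrable_exp_comp_of_monotone_sub (hu : Integrable u μ)
    (heu : Integrable (fun x => exp (u x)) μ) : Integrable (fun x => exp (T (u x))) μ := by
  refine ((integrable_const 1).add heu).const_mul (exp (T 0)) |>.mono'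
    (continuous_exp.measurable.comp_aemeasurable
      (hT.measurable.comp_aemeasurable hu.aemeasurable)).aestronglyMeasurable
    (ae_of_all _ fun x => ?_)
  rw [norm_of_nonneg (exp_pos _).le]
  calc exp (T (u x)) ≤ exp (T 0 + max (u x) 0) :=
        exp_le_exp.2 (le_apply_zero_add_max_zero_of_monotone_sub hT hT' (u x))
    _ ≤ exp (T 0) * (1 + exp (u x)) := by
        rw [exp_add]
        gcongr
        rcases max_choice (u x) 0 with h | h <;> rw [h] <;> simp [(exp_pos (u x)).le]

theorem integral_exp_sub_integral_comp_le (hu : Integrable u μ)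
    (heu : Integrable (fun x => exp (u x)) μ) :
    ∫ x, exp (T (u x) - ∫ y, T (u y) ∂μ) ∂μ ≤ ∫ x, exp (u x - ∫ y, u y ∂μ) ∂μ := by
  have hS : Monotone fun t => t - (t - T t) := by simpa only [sub_sub_cancel] using hT
  have hv := integrable_comp_of_monotone_sub hT hT' hu
  have hev := integrable_exp_comp_of_monotone_sub hT hT' hu heu
  have hev' := integrable_exp_comp_of_monotone_sub hT' hS hu heu
  have hfactor : ∀ x, exp (T (u x)) * exp (u x - T (u x)) = exp (u x) := fun x => by
    rw [← exp_add, add_sub_cancel]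
  have chebyshev :
      (∫ x, exp (T (u x)) ∂μ) * (∫ x, exp (u x - T (u x)) ∂μ) ≤ ∫ x, exp (u x) ∂μ := by
    simp only [← hfactor]
    refine Monovary.integral_mul_integral_le ?_ hev hev' (by simpa only [hfactor] using heu)
    exact ((exp_monotone.comp hT).monovary (exp_monotone.comp hT')).comp_right u
  have jensen : exp (∫ x, u x ∂μ - ∫ x, T (u x) ∂μ) ≤ ∫ x, exp (u x - T (u x)) ∂μ := by
    rw [← integral_sub hu hv]
    exact exp_integral_le_integral_exp (hu.sub hv) hev'
  rw [← integral_exp_mul_exp_neg_integral, ← integral_exp_mul_exp_neg_integral]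
  calc (∫ x, exp (T (u x)) ∂μ) * exp (-∫ x, T (u x) ∂μ)
      = (∫ x, exp (T (u x)) ∂μ) * exp (∫ x, u x ∂μ - ∫ x, T (u x) ∂μ) * exp (-∫ x, u x ∂μ) := by
        rw [mul_assoc, ← exp_add]; ring_nf
    _ ≤ (∫ x, exp (T (u x)) ∂μ) * (∫ x, exp (u x - T (u x)) ∂μ) * exp (-∫ x, u x ∂μ) := by
        gcongr
    _ ≤ (∫ x, exp (u x) ∂μ) * exp (-∫ x, u x ∂μ) := by gcongr

end MonotoneContraction

theorem monotone_max_min (c d : ℝ) : Monotone fun t : ℝ => max c (min t d) :=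
  monotone_const.max (monotone_id.min monotone_const)

theorem monotone_sub_max_min (c d : ℝ) : Monotone fun t : ℝ => t - max c (min t d) := by
  intro a b hab
  grind

theorem MeasureTheory.IntegrableOn.integrable_cond {α E : Type*} [MeasurableSpace α]
    [NormedAddCommGroup E] {μ : Measure α} {s : Set α} {f : α → E} (hf : IntegrableOn f s μ) :
    Integrable f μ[|s] := by
  by_cases hs : μ s = 0
  · simp [ProbabilityTheory.cond, Measure.restrict_eq_zero.2 hs]
  · exact hf.smul_measure (ENNReal.inv_ne_top.2 hs)

theorem volume_Icc_add_const {n : ℕ} (q : Fin n → ℝ) {h : ℝ} (hh : 0 ≤ h) :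
    volume (Icc q fun i => q i + h) = ENNReal.ofReal (h ^ n) := by
  simp [Real.volume_Icc_pi, ENNReal.ofReal_pow hh]

theorem isProbabilityMeasure_cond_Icc_add_const {n : ℕ} (q : Fin n → ℝ) {h : ℝ} (hh : 0 < h) :
    IsProbabilityMeasure (volume[|Icc q fun i => q i + h]) := by
  refine cond_isProbabilityMeasure_of_finite ?_ ?_ <;>
    simp [volume_Icc_add_const q hh.le, hh]

theorem cubeAvg_eq_integral_cond {n : ℕ} (f : (Fin n → ℝ) → ℝ) (q : Fin n → ℝ) {h : ℝ}
    (hh : 0 ≤ h) : cubeAvg n f q h = ∫ t, f t ∂(volume[|Icc q fun i => q i + h]) := by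
  rw [cubeAvg, ProbabilityTheory.cond, integral_smul_measure, volume_Icc_add_const q hh,
    ENNReal.toReal_inv, ENNReal.toReal_ofReal (by positivity), smul_eq_mul, div_eq_inv_mul]

theorem cubeAvg_exp_sub {n : ℕ} (f : (Fin n → ℝ) → ℝ) (a : ℝ) (q : Fin n → ℝ) (h : ℝ) :
    cubeAvg n (fun t => exp (f t - a)) q h = cubeAvg n (fun t => exp (f t)) q h * exp (-a) := by
  simp only [cubeAvg, exp_sub, integral_div, exp_neg]
  ring

theorem truncation_aInftyChar_le_general (n : ℕ) (φ : (Fin n → ℝ) → ℝ) (c d : ℝ)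
    (hmem : MemAInftyRn n fun t => Real.exp (φ t)) :
    (∀ (q : Fin n → ℝ) (h : ℝ), 0 < h →
      cubeAvg n
        (fun t => Real.exp (max c (min (φ t) d) -
          cubeAvg n (fun s => max c (min (φ s) d)) q h)) q h ≤
      cubeAvg n (fun t => Real.exp (φ t - cubeAvg n φ q h)) q h) ∧
    aInftyCharRn n (fun t => Real.exp (max c (min (φ t) d))) ≤
      aInftyCharRn n (fun t => Real.exp (φ t)) := by
  obtain ⟨-, hint, hbdd⟩ := hmem
  have hcube : ∀ (q : Fin n → ℝ) (h : ℝ), 0 < h →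
      cubeAvg n (fun t => exp (max c (min (φ t) d) -
          cubeAvg n (fun s => max c (min (φ s) d)) q h)) q h ≤
        cubeAvg n (fun t => exp (φ t - cubeAvg n φ q h)) q h := by
    intro q h hh
    have := isProbabilityMeasure_cond_Icc_add_const q hh
    obtain ⟨hexp, hlog⟩ := hint q h hh
    simp only [cubeAvg_eq_integral_cond _ q hh.le]
    exact integral_exp_sub_integral_comp_le (monotone_max_min c d) (monotone_sub_max_min c d)
      (by simpa only [log_exp] using hlog.integrable_cond) hexp.integrable_cond
  refine ⟨hcube, csSup_le ⟨_, 0, 1, one_pos, rfl⟩ ?_⟩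
  rintro r ⟨q, h, hh, rfl⟩
  refine le_csSup_of_le hbdd ⟨q, h, hh, rfl⟩ ?_
  simp only [log_exp, ← cubeAvg_exp_sub]
  exact hcube q h hh

/-- Truncation does not increase the `A∞` characteristic: if `e^φ ∈ A∞(ℝⁿ)` and
`c < d`, the truncation `φ_{c,d} = max(c, min(φ, d))` satisfies, for every cube
`J`, `(1/|J|)∫_J e^{φ_{c,d} − (φ_{c,d})_J} ≤ (1/|J|)∫_J e^{φ − φ_J}`, and
consequently `[e^{φ_{c,d}}]_{A∞} ≤ [e^φ]_{A∞}`. -/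
theorem truncation_aInftyChar_le (n : ℕ) (φ : (Fin n → ℝ) → ℝ) (c d : ℝ)
    (hcd : c < d) (hmem : MemAInftyRn n fun t => Real.exp (φ t)) :
    (∀ (q : Fin n → ℝ) (h : ℝ), 0 < h →
      cubeAvg n
        (fun t => Real.exp (max c (min (φ t) d) -
          cubeAvg n (fun s => max c (min (φ s) d)) q h)) q h ≤
      cubeAvg n (fun t => Real.exp (φ t - cubeAvg n φ q h)) q h) ∧
    aInftyCharRn n (fun t => Real.exp (max c (min (φ t) d))) ≤
      aInftyCharRn n (fun t => Real.exp (φ t)) :=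
  truncation_aInftyChar_le_general n φ c d hmem
end
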